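/- arXiv:1303.1337 — 3 statements merged into one kernel-verified Lean document; each statement's English description precedes it below -/
import Mathlib

section
/- Let (X, μ) be a measure space with finite measure μ, let φ : X → (0, ∞) be measurable, and let 1 < α < ∞. Then the infimum of ∫_X φ·ρ^α dμ over all nonnegative measurable functions ρ : X → [0, ∞] with ∫_X ρ dμ = 1 equals (∫_X φ^{1/(1-α)} dμ)^{1-α}. -/
/-!
With `β = 1/(1-α)`, Hölder's inequality with exponents `α` and `α/(α-1)` applied to
`ρ = (φ^{1/α} ρ) · φ^{-1/α}` gives `(∫ ρ)^α ≤ (∫ φ ρ^α) · (∫ φ^β)^{α-1}`, so every admissible `ρ`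
has energy at least `(∫ φ^β)^{1-α}`. Equality holds for `ρ = φ^β / ∫ φ^β`, since
`φ · (φ^β)^α = φ^β` by `1 + αβ = β`.
-/

open MeasureTheory
open scoped ENNReal

namespace ENNReal

lemma self_mul_rpow_one_div_one_sub_rpow {x : ℝ≥0∞} (hx0 : x ≠ 0) (hxtop : x ≠ ∞) {α : ℝ}
    (hα : α ≠ 1) : x * (x ^ (1 / (1 - α))) ^ α = x ^ (1 / (1 - α)) := by
  nth_rewrite 1 [← rpow_one x]
  rw [← rpow_mul, ← rpow_add _ _ hx0 hxtop]
  congr 1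
  field_simp
  ring

end ENNReal

section WeightedEnergy

variable {X : Type*} [MeasurableSpace X] {μ : Measure X} {φ ρ : X → ℝ≥0∞} {α : ℝ}

theorem lintegral_rpow_le_lintegral_mul_rpow_mul (hα : 1 < α) (hφm : AEMeasurable φ μ)
    (hφ0 : ∀ x, φ x ≠ 0) (hφtop : ∀ x, φ x ≠ ∞) (hρm : AEMeasurable ρ μ) :
    (∫⁻ x, ρ x ∂μ) ^ α ≤
      (∫⁻ x, φ x * ρ x ^ α ∂μ) * (∫⁻ x, φ x ^ (1 / (1 - α)) ∂μ) ^ (α - 1) := by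
  have hα0 : 0 < α := zero_lt_one.trans hα
  have hq : α.HolderConjugate (α / (α - 1)) := .conjExponent hα
  have holder := ENNReal.lintegral_mul_le_Lp_mul_Lq μ hq
    (f := fun x => φ x ^ (1 / α) * ρ x) (g := fun x => φ x ^ (-(1 / α)))
    ((hφm.pow_const _).mul hρm) (hφm.pow_const _)
  have hfg : ∀ x, φ x ^ (1 / α) * ρ x * φ x ^ (-(1 / α)) = ρ x := fun x => by
    rw [mul_right_comm, ← ENNReal.rpow_add _ _ (hφ0 x) (hφtop x), add_neg_cancel,
      ENNReal.rpow_zero, one_mul]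
  have hf : ∀ x, (φ x ^ (1 / α) * ρ x) ^ α = φ x * ρ x ^ α := fun x => by
    rw [ENNReal.mul_rpow_of_nonneg _ _ hα0.le, ← ENNReal.rpow_mul, one_div_mul_cancel hα0.ne',
      ENNReal.rpow_one]
  have hg : ∀ x, (φ x ^ (-(1 / α))) ^ (α / (α - 1)) = φ x ^ (1 / (1 - α)) := fun x => by
    rw [← ENNReal.rpow_mul]
    congr 1
    have : α - 1 ≠ 0 := sub_ne_zero.mpr hα.ne'
    have : 1 - α ≠ 0 := sub_ne_zero.mpr hα.ne
    field_simp
    ring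
  simp only [Pi.mul_apply, hfg, hf, hg] at holder
  calc (∫⁻ x, ρ x ∂μ) ^ α
      ≤ ((∫⁻ x, φ x * ρ x ^ α ∂μ) ^ (1 / α) *
          (∫⁻ x, φ x ^ (1 / (1 - α)) ∂μ) ^ (1 / (α / (α - 1)))) ^ α :=
        ENNReal.rpow_le_rpow holder hα0.le
    _ = (∫⁻ x, φ x * ρ x ^ α ∂μ) * (∫⁻ x, φ x ^ (1 / (1 - α)) ∂μ) ^ (α - 1) := by
        rw [ENNReal.mul_rpow_of_nonneg _ _ hα0.le, ← ENNReal.rpow_mul, ← ENNReal.rpow_mul,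
          one_div_mul_cancel hα0.ne', ENNReal.rpow_one]
        congr 2
        field_simp

theorem lintegral_mul_rpow_rpow_one_div_one_sub_mul_inv (hα : 1 < α) (hφm : Measurable φ)
    (hφ0 : ∀ x, φ x ≠ 0) (hφtop : ∀ x, φ x ≠ ∞)
    (hI0 : ∫⁻ x, φ x ^ (1 / (1 - α)) ∂μ ≠ 0) (hItop : ∫⁻ x, φ x ^ (1 / (1 - α)) ∂μ ≠ ∞) :
    ∫⁻ x, φ x * (φ x ^ (1 / (1 - α)) * (∫⁻ y, φ y ^ (1 / (1 - α)) ∂μ)⁻¹) ^ α ∂μ =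
      (∫⁻ x, φ x ^ (1 / (1 - α)) ∂μ) ^ (1 - α) := by
  set I := ∫⁻ x, φ x ^ (1 / (1 - α)) ∂μ
  have hα0 : 0 < α := zero_lt_one.trans hα
  calc ∫⁻ x, φ x * (φ x ^ (1 / (1 - α)) * I⁻¹) ^ α ∂μ
      = ∫⁻ x, φ x ^ (1 / (1 - α)) * I⁻¹ ^ α ∂μ := by
        refine lintegral_congr fun x => ?_
        rw [ENNReal.mul_rpow_of_nonneg _ _ hα0.le, ← mul_assoc,
          ENNReal.self_mul_rpow_one_div_one_sub_rpow (hφ0 x) (hφtop x) hα.ne']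
    _ = I * I ^ (-α) := by
        rw [lintegral_mul_const _ (hφm.pow_const _), ENNReal.inv_rpow, ENNReal.rpow_neg]
    _ = I ^ (1 - α) := by
        rw [sub_eq_add_neg, ENNReal.rpow_add _ _ hI0 hItop, ENNReal.rpow_one]

end WeightedEnergy

theorem stmt_0_general {X : Type*} [MeasurableSpace X] (μ : Measure X)
    (φ : X → ℝ≥0∞) (hφm : Measurable φ) (hφpos : ∀ x, 0 < φ x) (hφtop : ∀ x, φ x ≠ ∞)
    (α : ℝ) (hα : 1 < α)
    (hIpos : 0 < ∫⁻ x, φ x ^ (1 / (1 - α)) ∂μ)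
    (hIfin : ∫⁻ x, φ x ^ (1 / (1 - α)) ∂μ ≠ ∞) :
    sInf {I : ℝ≥0∞ | ∃ ρ : X → ℝ≥0∞, Measurable ρ ∧ (∫⁻ x, ρ x ∂μ) = 1 ∧
        I = ∫⁻ x, φ x * ρ x ^ α ∂μ} =
      (∫⁻ x, φ x ^ (1 / (1 - α)) ∂μ) ^ (1 - α) := by
  set I := ∫⁻ x, φ x ^ (1 / (1 - α)) ∂μ
  have hφ0 : ∀ x, φ x ≠ 0 := fun x => (hφpos x).ne'
  apply le_antisymm
  · refine sInf_le ⟨fun x => φ x ^ (1 / (1 - α)) * I⁻¹, (hφm.pow_const _).mul_const _, ?_,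
      (lintegral_mul_rpow_rpow_one_div_one_sub_mul_inv hα hφm hφ0 hφtop hIpos.ne' hIfin).symm⟩
    rw [lintegral_mul_const _ (hφm.pow_const _), ENNReal.mul_inv_cancel hIpos.ne' hIfin]
  · refine le_sInf ?_
    rintro _ ⟨ρ, hρm, hρ1, rfl⟩
    have hIα0 : I ^ (α - 1) ≠ 0 := (ENNReal.rpow_pos hIpos hIfin).ne'
    have hIαtop : I ^ (α - 1) ≠ ∞ := ENNReal.rpow_ne_top_of_nonneg (by linarith) hIfin
    have hlower := lintegral_rpow_le_lintegral_mul_rpow_mul hα hφm.aemeasurable hφ0 hφtop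
      hρm.aemeasurable (μ := μ)
    rw [hρ1, ENNReal.one_rpow, mul_comm] at hlower
    rw [← neg_sub, ENNReal.rpow_neg,
      ENNReal.inv_le_iff_le_mul (fun _ => hIα0) (fun h => absurd h hIαtop)]
    exact hlower

theorem stmt_0 {X : Type*} [MeasurableSpace X] (μ : Measure X) [IsFiniteMeasure μ]
    (φ : X → ℝ≥0∞) (hφm : Measurable φ) (hφpos : ∀ x, 0 < φ x) (hφtop : ∀ x, φ x ≠ ∞)
    (α : ℝ) (hα : 1 < α)
    (hIpos : 0 < ∫⁻ x, φ x ^ (1 / (1 - α)) ∂μ)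
    (hIfin : ∫⁻ x, φ x ^ (1 / (1 - α)) ∂μ ≠ ∞) :
    sInf {I : ℝ≥0∞ | ∃ ρ : X → ℝ≥0∞, Measurable ρ ∧ (∫⁻ x, ρ x ∂μ) = 1 ∧
        I = ∫⁻ x, φ x * ρ x ^ α ∂μ} =
      (∫⁻ x, φ x ^ (1 / (1 - α)) ∂μ) ^ (1 - α) :=
  stmt_0_general μ φ hφm hφpos hφtop α hα hIpos hIfin
end

section
/- Let μ be a finite measure on X and φ : X → (0, ∞) measurable with ∫_X φ^{1/(1−α)} dμ = ∞ for some α ∈ (1, ∞). Then the infimum of ∫_X φ ρ^α dμ over all nonnegative measurable ρ with ∫_X ρ dμ = 1 equals 0. -/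
/-!
Put `g = φ ^ (1 / (1 - α))` and truncate it, `fₙ = min g n`. Since `fₙ ≤ g`, pointwise
`φ fₙ ^ α ≤ fₙ`, so the density `ρ = fₙ / cₙ` with `cₙ = ∫ fₙ` has energy at most `cₙ ^ (1 - α)`.
By monotone convergence `cₙ → ∫ g = ∞`, and `cₙ ^ (1 - α) → 0` because `1 - α < 0`.
-/

open MeasureTheory Filter Topology
open scoped ENNReal

namespace ENNReal

theorem mul_rpow_le_self_of_le_rpow {α : ℝ} (hα : 1 < α) {a t : ℝ≥0∞}
    (ht : t ≤ a ^ (1 / (1 - α))) : a * t ^ α ≤ t := by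
  have hpow : t ^ (α - 1) ≤ a⁻¹ :=
    calc t ^ (α - 1) ≤ (a ^ (1 / (1 - α))) ^ (α - 1) := rpow_le_rpow ht (by linarith)
      _ = a⁻¹ := by
        have : 1 - α ≠ 0 := by linarith
        rw [← rpow_mul, show 1 / (1 - α) * (α - 1) = -1 by field_simp; ring, rpow_neg_one]
  calc a * t ^ α = t * (a * t ^ (α - 1)) := by
        rw [show α = 1 + (α - 1) by ring, rpow_add_of_nonneg _ _ zero_le_one (by linarith),
          rpow_one, add_sub_cancel_left]
        ring
    _ ≤ t * (a * a⁻¹) := by gcongr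
    _ ≤ t := mul_le_of_le_one_right' a.mul_inv_le_one

theorem tendsto_min_natCast_atTop (a : ℝ≥0∞) :
    Tendsto (fun n : ℕ => min a n) atTop (𝓝 a) := by
  simpa using (tendsto_const_nhds (x := a)).min tendsto_nat_nhds_top

end ENNReal

section

variable {X : Type*} [MeasurableSpace X] {μ : Measure X}

theorem lintegral_mul_rpow_mul_inv_lintegral_le {φ f : X → ℝ≥0∞} {α : ℝ} (hα : 0 ≤ α)
    (hφf : ∀ x, φ x * f x ^ α ≤ f x) (h0 : ∫⁻ x, f x ∂μ ≠ 0) (htop : ∫⁻ x, f x ∂μ ≠ ∞) :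
    ∫⁻ x, φ x * (f x * (∫⁻ y, f y ∂μ)⁻¹) ^ α ∂μ ≤ (∫⁻ x, f x ∂μ) ^ (1 - α) := by
  set c := ∫⁻ x, f x ∂μ
  have hc : (c⁻¹) ^ α ≠ ∞ := ENNReal.rpow_ne_top_of_nonneg hα (ENNReal.inv_ne_top.2 h0)
  calc ∫⁻ x, φ x * (f x * c⁻¹) ^ α ∂μ = (∫⁻ x, φ x * f x ^ α ∂μ) * (c⁻¹) ^ α := by
        simp_rw [ENNReal.mul_rpow_of_nonneg _ _ hα, ← mul_assoc]
        exact lintegral_mul_const' _ _ hc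
    _ ≤ c * (c⁻¹) ^ α := by gcongr; exact lintegral_mono hφf
    _ = c ^ (1 - α) := by
        rw [ENNReal.inv_rpow, ← ENNReal.rpow_neg, sub_eq_add_neg, ENNReal.rpow_add _ _ h0 htop,
          ENNReal.rpow_one]

theorem lintegral_mul_const_inv_lintegral {f : X → ℝ≥0∞} (h0 : ∫⁻ x, f x ∂μ ≠ 0)
    (htop : ∫⁻ x, f x ∂μ ≠ ∞) : ∫⁻ x, f x * (∫⁻ y, f y ∂μ)⁻¹ ∂μ = 1 := by
  rw [lintegral_mul_const' _ _ (ENNReal.inv_ne_top.2 h0), ENNReal.mul_inv_cancel h0 htop]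

end

theorem stmt_8_general {X : Type*} [MeasurableSpace X] (μ : Measure X) [IsFiniteMeasure μ]
    (φ : X → ℝ≥0∞) (hφm : Measurable φ)
    (α : ℝ) (hα : 1 < α)
    (hdiv : (∫⁻ x, φ x ^ (1 / (1 - α)) ∂μ) = ∞) :
    sInf {I : ℝ≥0∞ | ∃ ρ : X → ℝ≥0∞, Measurable ρ ∧ (∫⁻ x, ρ x ∂μ) = 1 ∧
        I = ∫⁻ x, φ x * ρ x ^ α ∂μ} = 0 := by
  set S := {I : ℝ≥0∞ | ∃ ρ : X → ℝ≥0∞, Measurable ρ ∧ (∫⁻ x, ρ x ∂μ) = 1 ∧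
        I = ∫⁻ x, φ x * ρ x ^ α ∂μ}
  set g : X → ℝ≥0∞ := fun x => φ x ^ (1 / (1 - α))
  set f : ℕ → X → ℝ≥0∞ := fun n x => min (g x) n
  have hf_meas (n : ℕ) : Measurable (f n) := (hφm.pow_const _).min measurable_const
  set c : ℕ → ℝ≥0∞ := fun n => ∫⁻ x, f n x ∂μ
  have hc_tendsto : Tendsto c atTop (𝓝 ∞) := hdiv ▸
    lintegral_tendsto_of_tendsto_of_monotone (fun n => (hf_meas n).aemeasurable)
      (ae_of_all _ fun x _ _ hmn => min_le_min_left _ (Nat.cast_le.2 hmn))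
      (ae_of_all _ fun x => ENNReal.tendsto_min_natCast_atTop (g x))
  have hc_top (n : ℕ) : c n ≠ ∞ :=
    ((lintegral_mono fun x => min_le_right _ _).trans_lt
      (lintegral_const_lt_top (ENNReal.natCast_ne_top n))).ne
  have hbound (n : ℕ) (hn : c n ≠ 0) : sInf S ≤ c n ^ (1 - α) :=
    sInf_le_of_le ⟨fun x => f n x * (c n)⁻¹, (hf_meas n).mul_const _,
      lintegral_mul_const_inv_lintegral hn (hc_top n), rfl⟩
      (lintegral_mul_rpow_mul_inv_lintegral_le (by linarith)
        (fun x => ENNReal.mul_rpow_le_self_of_le_rpow hα (min_le_left _ _)) hn (hc_top n))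
  have hpow_tendsto : Tendsto (fun n => c n ^ (1 - α)) atTop (𝓝 0) := by
    have h := ((ENNReal.continuous_rpow_const (y := 1 - α)).tendsto ∞).comp hc_tendsto
    rwa [ENNReal.top_rpow_of_neg (by linarith)] at h
  exact le_antisymm (ge_of_tendsto hpow_tendsto
    ((hc_tendsto.eventually_ne ENNReal.top_ne_zero).mono hbound)) bot_le

theorem stmt_8 {X : Type*} [MeasurableSpace X] (μ : Measure X) [IsFiniteMeasure μ]
    (φ : X → ℝ≥0∞) (hφm : Measurable φ) (hφpos : ∀ x, 0 < φ x) (hφtop : ∀ x, φ x ≠ ∞)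
    (α : ℝ) (hα : 1 < α)
    (hdiv : (∫⁻ x, φ x ^ (1 / (1 - α)) ∂μ) = ∞) :
    sInf {I : ℝ≥0∞ | ∃ ρ : X → ℝ≥0∞, Measurable ρ ∧ (∫⁻ x, ρ x ∂μ) = 1 ∧
        I = ∫⁻ x, φ x * ρ x ^ α ∂μ} = 0 :=
  stmt_8_general μ φ hφm α hα hdiv
end

section
/- For real numbers 0 < r₁ < r₂ and a measurable function q : (r₁, r₂) → (0, ∞), every Lebesgue measurable η : (r₁, r₂) → [0, ∞] with ∫_{r₁}^{r₂} η(r) dr ≥ 1 satisfies ∫_{r₁}^{r₂} q(r) η(r)ⁿ · r^{n−1} ω_{n−1} dr ≥ ω_{n−1} / I^{n−1}, where I = ∫_{r₁}^{r₂} dr / (r · q(r)^{1/(n−1)}), provided I ∈ (0, ∞). -/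
/-!
Write `η = (w η^n)^{1/n} · (w^{-1/(n-1)})^{(n-1)/n}` with the weight `w(r) = q(r) r^{n-1}`.
Hölder's inequality with exponents `n` and `n/(n-1)` gives
`1 ≤ (∫ η)^n ≤ (∫ w η^n) · (∫ w^{-1/(n-1)})^{n-1}`, and `w^{-1/(n-1)} = 1/(r q^{1/(n-1)})`
is exactly the integrand of `I`.
-/

open MeasureTheory
open scoped ENNReal

namespace ENNReal

theorem mul_rpow_rpow_inv_mul_rpow_neg_eq {w : ℝ≥0∞} (hw0 : w ≠ 0) (hwtop : w ≠ ∞)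
    (x : ℝ≥0∞) {p : ℝ} (hp0 : 0 < p) (hp1 : p ≠ 1) :
    (w * x ^ p) ^ p⁻¹ * (w ^ (-(p - 1)⁻¹)) ^ ((p - 1) / p) = x := by
  have hp1' : p - 1 ≠ 0 := sub_ne_zero.mpr hp1
  rw [mul_rpow_of_nonneg _ _ (inv_nonneg.mpr hp0.le), ← rpow_mul, ← rpow_mul,
    mul_inv_cancel₀ hp0.ne', rpow_one, mul_right_comm, ← rpow_add _ _ hw0 hwtop,
    show p⁻¹ + -(p - 1)⁻¹ * ((p - 1) / p) = 0 by field_simp; ring, rpow_zero, one_mul]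

theorem lintegral_rpow_le_lintegral_mul_rpow_mul_lintegral_rpow_neg {α : Type*}
    [MeasurableSpace α] {μ : Measure α} {p : ℝ} (hp : 1 < p) {w η : α → ℝ≥0∞}
    (hw : AEMeasurable w μ) (hη : AEMeasurable η μ)
    (hw0 : ∀ᵐ x ∂μ, w x ≠ 0) (hwtop : ∀ᵐ x ∂μ, w x ≠ ∞) :
    (∫⁻ x, η x ∂μ) ^ p ≤
      (∫⁻ x, w x * η x ^ p ∂μ) * (∫⁻ x, w x ^ (-(p - 1)⁻¹) ∂μ) ^ (p - 1) := by
  have hp0 : 0 < p := zero_lt_one.trans hp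
  have hholder := lintegral_mul_norm_pow_le (f := fun x => w x * η x ^ p)
    (hw.mul (hη.pow_const p))
    (hw.pow_const (-(p - 1)⁻¹)) (inv_nonneg.mpr hp0.le) (div_nonneg (sub_pos.mpr hp).le hp0.le)
    (by field_simp; ring)
  have hsplit : ∫⁻ x, η x ∂μ = ∫⁻ x, (w x * η x ^ p) ^ p⁻¹ *
      (w x ^ (-(p - 1)⁻¹)) ^ ((p - 1) / p) ∂μ := by
    refine lintegral_congr_ae ?_
    filter_upwards [hw0, hwtop] with x hx0 hxtop
    exact (mul_rpow_rpow_inv_mul_rpow_neg_eq hx0 hxtop _ hp0 hp.ne').symm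
  calc (∫⁻ x, η x ∂μ) ^ p
      ≤ ((∫⁻ x, w x * η x ^ p ∂μ) ^ p⁻¹ *
          (∫⁻ x, w x ^ (-(p - 1)⁻¹) ∂μ) ^ ((p - 1) / p)) ^ p := by
        rw [hsplit]; exact rpow_le_rpow hholder hp0.le
    _ = (∫⁻ x, w x * η x ^ p ∂μ) * (∫⁻ x, w x ^ (-(p - 1)⁻¹) ∂μ) ^ (p - 1) := by
        rw [mul_rpow_of_nonneg _ _ hp0.le, ← rpow_mul, ← rpow_mul, inv_mul_cancel₀ hp0.ne',
          div_mul_cancel₀ _ hp0.ne', rpow_one]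

theorem mul_ofReal_rpow_sub_one_rpow_neg_inv (a : ℝ≥0∞) {r p : ℝ} (hr : 0 < r) (hp : 1 < p) :
    (a * ENNReal.ofReal (r ^ (p - 1))) ^ (-(p - 1)⁻¹) =
      (ENNReal.ofReal r * a ^ (1 / (p - 1)))⁻¹ := by
  have hp1 : 0 < p - 1 := sub_pos.mpr hp
  rw [rpow_neg, mul_rpow_of_nonneg _ _ (inv_nonneg.mpr hp1.le),
    ofReal_rpow_of_pos (Real.rpow_pos_of_pos hr _), ← Real.rpow_mul hr.le,
    mul_inv_cancel₀ hp1.ne', Real.rpow_one, mul_comm, one_div]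

theorem div_le_mul_of_one_le_mul {a b c : ℝ≥0∞} (h : 1 ≤ a * b) : c / b ≤ a * c :=
  div_le_of_le_mul ((le_mul_of_one_le_left' h).trans_eq (by ring))

end ENNReal

theorem stmt_9_general {n : ℕ} (hn : 2 ≤ n) (r₁ r₂ : ℝ) (hr₁ : 0 < r₁)
    (ω : ℝ≥0∞)
    (q : ℝ → ℝ≥0∞) (hqm : Measurable q) (hqpos : ∀ r, 0 < q r) (hqtop : ∀ r, q r ≠ ∞)
    (I : ℝ≥0∞)
    (hI : I = ∫⁻ r in Set.Ioo r₁ r₂,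
      (ENNReal.ofReal r * q r ^ (1 / ((n : ℝ) - 1)))⁻¹)
    (η : ℝ → ℝ≥0∞) (hηm : Measurable η)
    (hadm : 1 ≤ ∫⁻ r in Set.Ioo r₁ r₂, η r) :
    ω / I ^ ((n : ℝ) - 1) ≤
      ∫⁻ r in Set.Ioo r₁ r₂,
        q r * η r ^ (n : ℝ) * ENNReal.ofReal (r ^ ((n : ℝ) - 1)) * ω := by
  have hn1 : (1 : ℝ) < n := by exact_mod_cast hn
  set w : ℝ → ℝ≥0∞ := fun r => q r * ENNReal.ofReal (r ^ ((n : ℝ) - 1))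
  have hwm : Measurable w := hqm.mul (ENNReal.measurable_ofReal.comp (measurable_id.pow_const _))
  have hpos : ∀ᵐ r ∂volume.restrict (Set.Ioo r₁ r₂), 0 < r :=
    ae_restrict_of_forall_mem measurableSet_Ioo fun r hr => hr₁.trans hr.1
  have hw0 : ∀ᵐ r ∂volume.restrict (Set.Ioo r₁ r₂), w r ≠ 0 := by
    filter_upwards [hpos] with r hr
    exact mul_ne_zero (hqpos r).ne' (ENNReal.ofReal_pos.mpr (Real.rpow_pos_of_pos hr _)).ne'
  have hwtop : ∀ᵐ r ∂volume.restrict (Set.Ioo r₁ r₂), w r ≠ ∞ :=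
    ae_of_all _ fun r => ENNReal.mul_ne_top (hqtop r) ENNReal.ofReal_ne_top
  have hIw : I = ∫⁻ r in Set.Ioo r₁ r₂, w r ^ (-((n : ℝ) - 1)⁻¹) := by
    rw [hI]
    refine lintegral_congr_ae ?_
    filter_upwards [hpos] with r hr
    exact (ENNReal.mul_ofReal_rpow_sub_one_rpow_neg_inv (q r) hr hn1).symm
  have hJ : ∫⁻ r in Set.Ioo r₁ r₂, q r * η r ^ (n : ℝ) * ENNReal.ofReal (r ^ ((n : ℝ) - 1)) * ω
      = (∫⁻ r in Set.Ioo r₁ r₂, w r * η r ^ (n : ℝ)) * ω := by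
    rw [← lintegral_mul_const _ (show Measurable fun r => w r * η r ^ (n : ℝ) from
      hwm.mul (hηm.pow_const _))]
    exact lintegral_congr fun r => by ring
  have hkey := ENNReal.lintegral_rpow_le_lintegral_mul_rpow_mul_lintegral_rpow_neg hn1
    hwm.aemeasurable hηm.aemeasurable hw0 hwtop
  rw [← hIw] at hkey
  rw [hJ]
  exact ENNReal.div_le_mul_of_one_le_mul ((ENNReal.one_le_rpow hadm (by linarith)).trans hkey)

theorem stmt_9 {n : ℕ} (hn : 2 ≤ n) (r₁ r₂ : ℝ) (hr₁ : 0 < r₁) (hr : r₁ < r₂)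
    (ω : ℝ≥0∞) (hωpos : 0 < ω) (hωfin : ω ≠ ∞)
    (q : ℝ → ℝ≥0∞) (hqm : Measurable q) (hqpos : ∀ r, 0 < q r) (hqtop : ∀ r, q r ≠ ∞)
    (I : ℝ≥0∞)
    (hI : I = ∫⁻ r in Set.Ioo r₁ r₂,
      (ENNReal.ofReal r * q r ^ (1 / ((n : ℝ) - 1)))⁻¹)
    (hIpos : 0 < I) (hIfin : I ≠ ∞)
    (η : ℝ → ℝ≥0∞) (hηm : Measurable η)
    (hadm : 1 ≤ ∫⁻ r in Set.Ioo r₁ r₂, η r) :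
    ω / I ^ ((n : ℝ) - 1) ≤
      ∫⁻ r in Set.Ioo r₁ r₂,
        q r * η r ^ (n : ℝ) * ENNReal.ofReal (r ^ ((n : ℝ) - 1)) * ω :=
  stmt_9_general hn r₁ r₂ hr₁ ω q hqm hqpos hqtop I hI η hηm hadm
end
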